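/- Let Γ be a simplicial complex with gr_1(Γ) > 2r+1. If uv is an edge of Γ, then a non-returning walk of length r+1 starting with the directed edge uv and a non-returning walk of length r+1 starting with the directed edge vu must have different endpoints. -/

import Mathlib

open Finset

/-- An (abstract) simplicial complex on vertex type `V`: a collection of finite
subsets of `V` (the faces) closed under taking subsets. -/
structure SC (V : Type*) where
  faces : Set (Finset V)
  down_closed : ∀ {F G : Finset V}, F ∈ faces → G ⊆ F → G ∈ faces

namespace SC

variable {V : Type*} [LinearOrder V]

/-- The vertex set of a simplicial complex. -/
def vertexSet (K : SC V) : Set V := {v | {v} ∈ K.faces}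

/-- The induced subcomplex `K[W]` on a set `W` of vertices. -/
def restrict (K : SC V) (W : Set V) : SC V where
  faces := {F | F ∈ K.faces ∧ ↑F ⊆ W}
  down_closed := fun hF hGF =>
    ⟨K.down_closed hF.1 hGF, Set.Subset.trans (Finset.coe_subset.mpr hGF) hF.2⟩

/-- The link `lk_K(F)` of a face `F`: all `G` disjoint from `F` with `F ∪ G ∈ K`. -/
def link (K : SC V) (F : Finset V) : SC V where
  faces := {G | Disjoint F G ∧ F ∪ G ∈ K.faces}
  down_closed := fun hG hHG =>
    ⟨hG.1.mono_right (Finset.le_iff_subset.mpr hHG),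
      K.down_closed hG.2 (Finset.union_subset_union_right hHG)⟩

/-- A complex is flag if every set all of whose subsets of cardinality at most 2
are faces is itself a face (equivalently, all minimal non-faces have two vertices). -/
def Flag (K : SC V) : Prop :=
  ∀ F : Finset V, (∀ G ⊆ F, G.card ≤ 2 → G ∈ K.faces) → F ∈ K.faces

/-- The faces of `K` with exactly `n` vertices (i.e. of dimension `n-1`). -/
def faceSet (K : SC V) (n : ℕ) : Set (Finset V) := {F | F ∈ K.faces ∧ F.card = n}

variable (k : Type*) [Field k]

/-- Simplicial `(n-1)`-chains with coefficients in `k`: formal `k`-linear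
combinations of faces with `n` vertices.  (`n = 0` corresponds to the empty face,
used for *reduced* homology.) -/
abbrev Chains (K : SC V) (n : ℕ) := (faceSet K n) →₀ k

/-- The boundary of a single face, with the usual signs determined by the
linear order on the vertices. -/
noncomputable def bdFace (K : SC V) (n : ℕ) (F : faceSet K (n + 1)) : Chains k K n :=
  ∑ v ∈ (F : Finset V).attach,
    ((-1 : k) ^ (((F : Finset V).filter (fun x => x < (v : V))).card)) •
      Finsupp.single (⟨(F : Finset V).erase v,
        K.down_closed F.2.1 (Finset.erase_subset _ _),
        by rw [Finset.card_erase_of_mem v.2, F.2.2]; rfl⟩ : faceSet K n) 1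

/-- The simplicial boundary map. -/
noncomputable def bd (K : SC V) (n : ℕ) : Chains k K (n + 1) →ₗ[k] Chains k K n :=
  Finsupp.lsum k fun F => LinearMap.toSpanSingleton k _ (bdFace k K n F)

/-- The reduced cycles in degree `n - 1` (chains supported on faces with `n` vertices). -/
noncomputable def cycles (K : SC V) : (n : ℕ) → Submodule k (Chains k K n)
  | 0 => ⊤
  | (m + 1) => LinearMap.ker (bd k K m)

/-- The boundaries in degree `n - 1`. -/
noncomputable def boundaries (K : SC V) (n : ℕ) : Submodule k (Chains k K n) :=
  LinearMap.range (bd k K n)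

/-- `HNonzero k K n` says that the reduced simplicial homology `H̃_{n-1}(K; k)`
is nonzero: some reduced cycle on faces with `n` vertices is not a boundary. -/
def HNonzero (K : SC V) (n : ℕ) : Prop := ¬ (cycles k K n ≤ boundaries k K n)

/-- The dimension of the reduced homology `H̃_{n-1}(K; k)` as a `k`-vector space
(for finite complexes): `dim (cycles) - dim (boundaries ∩ cycles)`. -/
noncomputable def homDim (K : SC V) (n : ℕ) : ℕ :=
  Module.finrank k ↥(cycles k K n) -
    Module.finrank k ↥(boundaries k K n ⊓ cycles k K n)

/-- `girth k K p` is the `(p-1)`-girth `gr_{p-1}(K)` over the field `k`: the least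
cardinality of a vertex set `W` such that `H̃_{p-1}(lk_K(F)[W]; k) ≠ 0` for some
face `F` of `K` (including the empty face), or `∞` if there is no such `W`. -/
noncomputable def girth (K : SC V) (p : ℕ) : ℕ∞ :=
  sInf ((fun W : Finset V => (W.card : ℕ∞)) ''
    {W : Finset V | ∃ F ∈ K.faces, HNonzero k ((K.link F).restrict ↑W) p})

/-- A non-returning walk of length `len` in the directed 1-skeleton of `K`:
consecutive vertices span edges, and no three consecutive vertices return
(`v_i ≠ v_{i+2}`) or span a 2-face of `K`. -/
def IsNRWalk (K : SC V) (len : ℕ) (w : ℕ → V) : Prop :=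
  (∀ i < len, w i ≠ w (i + 1) ∧ ({w i, w (i + 1)} : Finset V) ∈ K.faces) ∧
  (∀ i, i + 2 ≤ len → w i ≠ w (i + 2) ∧ ({w i, w (i + 1), w (i + 2)} : Finset V) ∉ K.faces)

end SC

/-!
Reversing the walk from `vu` and gluing it to the walk from `uv` along the edge `uv` gives a
non-returning walk of length `2r + 1`, which is closed if the two endpoints agree. Shortcutting a
closed non-returning walk at repeated vertices and along chords yields an induced cycle of length
`L ≤ 2r + 1` that is not a triangle of `Γ` (for `L = 3` this is the non-returning condition at a
corner), so `Γ` restricted to its vertices has no `2`-faces. The sum of the oriented edges of the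
cycle is then a nonzero `1`-cycle that is not a boundary, whence `gr_1(Γ) ≤ L ≤ 2r + 1`.
-/

namespace SC

variable {V : Type*} [LinearOrder V]

theorem link_empty (K : SC V) : K.link ∅ = K := by
  cases K; simp [link]

section Chains

variable (k : Type*) [Field k]

open Classical in
noncomputable def faceChain (K : SC V) (n : ℕ) (F : Finset V) : Chains k K n :=
  if h : F ∈ faceSet K n then Finsupp.single ⟨F, h⟩ 1 else 0

theorem faceChain_apply (K : SC V) (n : ℕ) (F : Finset V) (p : faceSet K n) :
    faceChain k K n F p = if (p : Finset V) = F then 1 else 0 := by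
  unfold faceChain
  split_ifs with hF hp hp
  · rw [Finsupp.single_apply, if_pos (Subtype.ext hp.symm)]
  · rw [Finsupp.single_apply, if_neg fun h => hp (congrArg Subtype.val h).symm]
  · exact absurd (hp ▸ p.2) hF
  · rfl

theorem bdFace_eq_sum (K : SC V) (n : ℕ) (F : faceSet K (n + 1)) :
    bdFace k K n F = ∑ v ∈ (F : Finset V),
      (-1 : k) ^ ((F : Finset V).filter (· < v)).card • faceChain k K n ((F : Finset V).erase v) := by
  rw [bdFace, ← sum_attach (F : Finset V)]
  refine sum_congr rfl fun v _ => ?_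
  rw [faceChain, dif_pos ⟨K.down_closed F.2.1 (erase_subset _ _),
    by rw [card_erase_of_mem v.2, F.2.2]; rfl⟩]

theorem bd_faceChain_pair (K : SC V) {a b : V} (hab : a < b) (h : {a, b} ∈ K.faces) :
    bd k K 1 (faceChain k K 2 {a, b}) = faceChain k K 1 {b} - faceChain k K 1 {a} := by
  have hF : ({a, b} : Finset V) ∈ faceSet K 2 := ⟨h, card_pair hab.ne⟩
  have hfa : ({a, b} : Finset V).filter (· < a) = ∅ := by
    ext y
    simp only [mem_filter, mem_insert, mem_singleton]
    constructor
    · rintro ⟨rfl | rfl, hy⟩ <;> simp_all [lt_asymm hab]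
    · simp
  have hfb : ({a, b} : Finset V).filter (· < b) = {a} := by
    ext y
    simp only [mem_filter, mem_insert, mem_singleton]
    constructor
    · rintro ⟨rfl | rfl, hy⟩ <;> simp_all
    · rintro rfl; exact ⟨Or.inl rfl, hab⟩
  have hea : ({a, b} : Finset V).erase a = {b} := erase_insert (by simp [hab.ne])
  have heb : ({a, b} : Finset V).erase b = {a} := by
    rw [pair_comm]; exact erase_insert (by simp [hab.ne'])
  rw [faceChain, dif_pos hF, bd, Finsupp.lsum_single, LinearMap.toSpanSingleton_apply, one_smul,
    bdFace_eq_sum]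
  simp only [sum_pair hab.ne, hfa, hfb, hea, heb, card_empty, card_singleton]
  simp [sub_eq_add_neg, add_comm]

noncomputable def edgeChain (K : SC V) (a b : V) : Chains k K 2 :=
  if a < b then faceChain k K 2 {a, b} else -faceChain k K 2 {a, b}

theorem bd_edgeChain (K : SC V) {a b : V} (hab : a ≠ b) (h : {a, b} ∈ K.faces) :
    bd k K 1 (edgeChain k K a b) = faceChain k K 1 {b} - faceChain k K 1 {a} := by
  rcases hab.lt_or_gt with hlt | hlt
  · rw [edgeChain, if_pos hlt, bd_faceChain_pair k K hlt h]
  · rw [edgeChain, if_neg (lt_asymm hlt), map_neg, pair_comm,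
      bd_faceChain_pair k K hlt (by rwa [pair_comm]), neg_sub]

theorem edgeChain_apply_eq_zero (K : SC V) {a b : V} {p : faceSet K 2}
    (hp : (p : Finset V) ≠ {a, b}) : edgeChain k K a b p = 0 := by
  unfold edgeChain; split_ifs <;> simp [faceChain_apply, hp]

theorem edgeChain_apply_ne_zero (K : SC V) {a b : V} {p : faceSet K 2}
    (hp : (p : Finset V) = {a, b}) : edgeChain k K a b p ≠ 0 := by
  unfold edgeChain; split_ifs <;> simp [faceChain_apply, hp]

noncomputable def loopChain (K : SC V) (L : ℕ) (c : ℕ → V) : Chains k K 2 :=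
  ∑ i ∈ range L, edgeChain k K (c i) (c (i + 1))

variable {K : SC V} {c : ℕ → V}

theorem loopChain_mem_cycles {L : ℕ}
    (hedge : ∀ i < L, c i ≠ c (i + 1) ∧ ({c i, c (i + 1)} : Finset V) ∈ K.faces)
    (hclose : c L = c 0) : loopChain k K L c ∈ cycles k K 2 := by
  change _ ∈ LinearMap.ker (bd k K 1)
  rw [LinearMap.mem_ker, loopChain, map_sum,
    sum_congr rfl fun i hi => bd_edgeChain k K (hedge i (mem_range.1 hi)).1
      (hedge i (mem_range.1 hi)).2,
    sum_range_sub (fun i => faceChain k K 1 {c i}), hclose, sub_self]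

/-- Only the first edge of the loop contributes to the coefficient of `{c 0, c 1}`. -/
theorem loopChain_ne_zero {n : ℕ} (hn : 2 ≤ n) (hinj : Set.InjOn c (Set.Iic n))
    (h01 : ({c 0, c 1} : Finset V) ∈ faceSet K 2) : loopChain k K (n + 1) c ≠ 0 := by
  intro h0
  have hcoeff := congrArg (fun σ : Chains k K 2 => σ ⟨_, h01⟩) h0
  simp only [loopChain, Finsupp.finsetSum_apply, Finsupp.coe_zero, Pi.zero_apply] at hcoeff
  rw [sum_eq_single_of_mem 0 (by simp) fun i hi hi0 => ?_] at hcoeff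
  · exact edgeChain_apply_ne_zero k K rfl hcoeff
  refine edgeChain_apply_eq_zero k K fun he => ?_
  have hin : i ≤ n := Nat.lt_succ_iff.1 (mem_range.1 hi)
  have hmem : ∀ x, x = c 0 ∨ x = c 1 ↔ x = c i ∨ x = c (i + 1) := by
    simpa [Finset.ext_iff] using he
  have hinj' : ∀ s t, s ≤ n → t ≤ n → c s = c t → s = t := fun s t hs ht => hinj hs ht
  rcases (hmem (c i)).2 (Or.inl rfl) with hi' | hi'
  · exact hi0 (hinj' _ _ hin (by omega) hi')
  · obtain rfl := hinj' _ _ hin (by omega) hi'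
    rcases (hmem (c 2)).2 (Or.inr rfl) with h2 | h2
    · exact absurd (hinj' _ _ hn (by omega) h2) (by omega)
    · exact absurd (hinj' _ _ hn (by omega) h2) (by omega)

theorem hNonzero_of_ne_zero {n : ℕ} {σ : Chains k K n} (hσ : σ ∈ cycles k K n) (hσ0 : σ ≠ 0)
    (hK : ∀ F, F ∉ faceSet K (n + 1)) : HNonzero k K n := by
  intro hle
  obtain ⟨β, hβ⟩ := hle hσ
  have hβ0 : β = 0 := by ext p; exact absurd p.2 (hK p)
  exact hσ0 (by rw [← hβ, hβ0, map_zero])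

end Chains

section Walks

variable {K : SC V} {n : ℕ} {c : ℕ → V}

namespace IsNRWalk

theorem congr {d : ℕ → V} (h : IsNRWalk K n c) (hcd : ∀ i ≤ n, c i = d i) :
    IsNRWalk K n d := by
  refine ⟨fun i hi => ?_, fun i hi => ?_⟩
  · rw [← hcd i (by omega), ← hcd (i + 1) (by omega)]; exact h.1 i hi
  · rw [← hcd i (by omega), ← hcd (i + 1) (by omega), ← hcd (i + 2) (by omega)]; exact h.2 i hi

theorem shift {s m : ℕ} (h : IsNRWalk K n c) (hsm : s + m ≤ n) :
    IsNRWalk K m (fun i => c (s + i)) :=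
  ⟨fun i _ => h.1 (s + i) (by omega), fun i _ => h.2 (s + i) (by omega)⟩

theorem reverse (h : IsNRWalk K n c) : IsNRWalk K n (fun i => c (n - i)) := by
  refine ⟨fun i hi => ?_, fun i hi => ?_⟩
  · obtain ⟨hne, hface⟩ := h.1 (n - (i + 1)) (by omega)
    rw [show n - (i + 1) + 1 = n - i by omega] at hne hface
    exact ⟨hne.symm, by rwa [pair_comm] at hface⟩
  · obtain ⟨hne, hface⟩ := h.2 (n - (i + 2)) (by omega)
    have e1 : n - (i + 2) + 1 = n - (i + 1) := by omega
    have e2 : n - (i + 2) + 2 = n - i := by omega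
    rw [e2] at hne
    rw [e1, e2, show ∀ x y z : V, ({x, y, z} : Finset V) = {z, y, x} by
      intro x y z; ext; simp only [mem_insert, mem_singleton]; tauto] at hface
    exact ⟨hne.symm, hface⟩

theorem append {m : ℕ} (h₁ : IsNRWalk K (m + 1) c)
    (h₂ : IsNRWalk K (n + 1) (fun j => c (m + j))) : IsNRWalk K (m + n + 1) c := by
  refine ⟨fun i hi => ?_, fun i hi => ?_⟩
  · by_cases him : i < m + 1
    · exact h₁.1 i him
    · simpa [show m + (i - m) = i by omega, show m + (i - m + 1) = i + 1 by omega]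
        using h₂.1 (i - m) (by omega)
  · by_cases him : i + 2 ≤ m + 1
    · exact h₁.2 i him
    · simpa [show m + (i - m) = i by omega, show m + (i - m + 1) = i + 1 by omega,
        show m + (i - m + 2) = i + 2 by omega] using h₂.2 (i - m) (by omega)

end IsNRWalk

/-- A closed walk `c 0, …, c (n + 1) = c 0`, non-returning except possibly at the two corners
through `c 0`: unlike closed non-returning walks, such loops survive shortcutting along a chord. -/
def IsNRLoop (K : SC V) (n : ℕ) (c : ℕ → V) : Prop :=
  IsNRWalk K n c ∧ c n ≠ c (n + 1) ∧ ({c n, c (n + 1)} : Finset V) ∈ K.faces ∧ c (n + 1) = c 0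

theorem IsNRWalk.isNRLoop (h : IsNRWalk K (n + 1) c) (hc : c (n + 1) = c 0) : IsNRLoop K n c :=
  ⟨⟨fun i _ => h.1 i (by omega), fun i _ => h.2 i (by omega)⟩, (h.1 n (by omega)).1,
    (h.1 n (by omega)).2, hc⟩

namespace IsNRLoop

theorem edge (h : IsNRLoop K n c) {i : ℕ} (hi : i ≤ n) :
    c i ≠ c (i + 1) ∧ ({c i, c (i + 1)} : Finset V) ∈ K.faces := by
  rcases hi.lt_or_eq with hi | rfl
  · exact h.1.1 i hi
  · exact ⟨h.2.1, h.2.2.1⟩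

theorem subloop_of_eq (h : IsNRLoop K n c) {s m : ℕ} (hsm : s + m + 1 ≤ n)
    (heq : c (s + m + 1) = c s) : IsNRLoop K m (fun i => c (s + i)) :=
  ⟨h.1.shift (by omega), (h.edge (i := s + m) (by omega)).1,
    (h.edge (i := s + m) (by omega)).2, heq⟩

theorem subloop_of_chord (h : IsNRLoop K n c) {i m : ℕ} (him : i + m ≤ n)
    (hne : c (i + m) ≠ c i) (hchord : ({c (i + m), c i} : Finset V) ∈ K.faces) :
    IsNRLoop K m (fun t => if t ≤ m then c (i + t) else c i) := by
  refine ⟨(h.1.shift him).congr fun t ht => by simp [ht], ?_, ?_, ?_⟩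
  · simpa using hne
  · simpa using hchord
  · simp

theorem card_ne_three_of_chordless (h : IsNRLoop K n c) (hinj : Set.InjOn c (Set.Iic n))
    (hchord : ∀ i m, 2 ≤ m → m < n → i + m ≤ n → ({c i, c (i + m)} : Finset V) ∉ K.faces)
    {F : Finset V} (hF : F ∈ K.faces) (hFW : F ⊆ (range (n + 1)).image c) :
    F.card ≠ 3 := by
  intro h3
  set I := (range (n + 1)).filter (fun i => c i ∈ F)
  have hmem : ∀ s ∈ I, s ≤ n ∧ c s ∈ F := fun s hs => by
    simpa [I, Nat.lt_succ_iff] using hs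
  have hFI : I.image c = F := by
    ext x
    simp only [mem_image]
    refine ⟨fun ⟨s, hs, hx⟩ => hx ▸ (hmem s hs).2, fun hx => ?_⟩
    obtain ⟨s, hs, rfl⟩ := mem_image.1 (hFW hx)
    exact ⟨s, mem_filter.2 ⟨hs, hx⟩, rfl⟩
  have hI3 : I.card = 3 := by
    rw [← h3, ← hFI, card_image_of_injOn fun s hs t ht => hinj (hmem s hs).1 (hmem t ht).1]
  obtain ⟨a, b, d, hab, had, hbd, hI⟩ := card_eq_three.1 hI3
  have adj : ∀ s ∈ I, ∀ t ∈ I, s + 2 ≤ t → s = 0 ∧ t = n := by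
    intro s hs t ht hst
    have htn := (hmem t ht).1
    by_contra hst'
    refine hchord s (t - s) (by omega) (by omega) (by omega) (K.down_closed hF ?_)
    rw [show s + (t - s) = t by omega, insert_subset_iff, singleton_subset_iff]
    exact ⟨(hmem s hs).2, (hmem t ht).2⟩
  have ha := (hmem a (by simp [hI])).1
  have hb := (hmem b (by simp [hI])).1
  have hd := (hmem d (by simp [hI])).1
  simp only [hI, mem_insert, mem_singleton, forall_eq_or_imp, forall_eq] at adj
  obtain rfl : n = 2 := by omega
  have hF012 : F = {c 0, c 1, c 2} := by
    refine eq_of_subset_of_card_le (fun x hx => ?_) (card_le_three.trans h3.ge)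
    obtain ⟨s, hs, rfl⟩ := mem_image.1 (hFW hx)
    rw [mem_range] at hs
    interval_cases s <;> simp
  exact (h.1.2 0 le_rfl).2 (hF012 ▸ hF)

end IsNRLoop

end Walks

section Girth

variable (k : Type*) [Field k] {K : SC V} {n : ℕ} {c : ℕ → V}

theorem girth_le_card {p : ℕ} {F W : Finset V} (hF : F ∈ K.faces)
    (hH : HNonzero k ((K.link F).restrict W) p) : girth k K p ≤ W.card :=
  sInf_le ⟨W, ⟨F, hF, hH⟩, rfl⟩

theorem IsNRLoop.girth_le_of_chordless (h : IsNRLoop K n c) (hn : 2 ≤ n)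
    (hinj : Set.InjOn c (Set.Iic n))
    (hchord : ∀ i m, 2 ≤ m → m < n → i + m ≤ n → ({c i, c (i + m)} : Finset V) ∉ K.faces) :
    girth k K 2 ≤ (n + 1 : ℕ) := by
  set W := (range (n + 1)).image c
  have hW : ∀ i ≤ n + 1, c i ∈ W := by
    intro i hi
    rcases hi.lt_or_eq with hi | rfl
    · exact mem_image_of_mem c (mem_range.2 hi)
    · rw [h.2.2.2]; exact mem_image_of_mem c (mem_range.2 (by omega))
  have hedge : ∀ i < n + 1,
      c i ≠ c (i + 1) ∧ ({c i, c (i + 1)} : Finset V) ∈ (K.restrict W).faces := by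
    intro i hi
    refine ⟨(h.edge (by omega)).1, (h.edge (by omega)).2, ?_⟩
    simp only [coe_insert, coe_singleton, Set.insert_subset_iff, Set.singleton_subset_iff,
      mem_coe]
    exact ⟨hW i (by omega), hW (i + 1) hi⟩
  have hH : HNonzero k (K.restrict W) 2 := by
    refine hNonzero_of_ne_zero k (loopChain_mem_cycles k hedge h.2.2.2)
      (loopChain_ne_zero k hn hinj ⟨(hedge 0 (by omega)).2, card_pair (hedge 0 (by omega)).1⟩) ?_
    rintro F ⟨⟨hF, hFW⟩, h3⟩
    exact h.card_ne_three_of_chordless hinj hchord hF (by exact_mod_cast hFW) h3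
  calc girth k K 2 ≤ W.card :=
        girth_le_card k (K.down_closed (h.edge (i := 0) (by omega)).2 (empty_subset _))
          (by rwa [link_empty])
    _ ≤ (n + 1 : ℕ) := by exact_mod_cast card_image_le.trans (card_range _).le

theorem IsNRLoop.girth_le (h : IsNRLoop K n c) (hn : 2 ≤ n) : girth k K 2 ≤ (n + 1 : ℕ) := by
  induction n using Nat.strong_induction_on generalizing c with
  | _ n ih =>
  by_cases hrep : ∃ s m, s + m + 1 ≤ n ∧ c (s + m + 1) = c s
  · obtain ⟨s, m, hsm, heq⟩ := hrep
    have hm : 2 ≤ m := by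
      by_contra hm
      interval_cases m
      · exact (h.edge (i := s) (by omega)).1 heq.symm
      · exact (h.1.2 s (by omega)).1 heq.symm
    exact (ih m (by omega) (h.subloop_of_eq hsm heq) hm).trans (by exact_mod_cast (by omega))
  push Not at hrep
  have hinj : Set.InjOn c (Set.Iic n) := by
    intro s hs t ht hst
    rw [Set.mem_Iic] at hs ht
    by_contra hne
    rcases Nat.lt_or_gt_of_ne hne with hlt | hlt
    · exact hrep s (t - s - 1) (by omega)
        (by rw [show s + (t - s - 1) + 1 = t by omega]; exact hst.symm)
    · exact hrep t (s - t - 1) (by omega)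
        (by rw [show t + (s - t - 1) + 1 = s by omega]; exact hst)
  by_cases hchord : ∃ i m, 2 ≤ m ∧ m < n ∧ i + m ≤ n ∧ ({c i, c (i + m)} : Finset V) ∈ K.faces
  · obtain ⟨i, m, hm, hmn, him, hface⟩ := hchord
    have hne : c (i + m) ≠ c i := fun he => by
      have := hinj (show i + m ≤ n from him) (show i ≤ n by omega) he
      omega
    exact (ih m hmn (h.subloop_of_chord him hne (by rwa [pair_comm])) hm).trans
      (by exact_mod_cast (by omega))
  push Not at hchord
  exact h.girth_le_of_chordless k hn hinj hchord

theorem IsNRWalk.girth_le_of_closed (h : IsNRWalk K (n + 1) c) (hc : c (n + 1) = c 0) :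
    girth k K 2 ≤ (n + 1 : ℕ) := by
  have hn : 2 ≤ n := by
    by_contra hn
    interval_cases n
    · exact (h.1 0 (by omega)).1 hc.symm
    · exact (h.2 0 (by omega)).1 hc.symm
  exact (h.isNRLoop hc).girth_le k hn

end Girth

end SC

theorem nrwalk_endpoints_ne_general {V : Type*} [LinearOrder V] (k : Type*) [Field k]
    (K : SC V) (r : ℕ) (hg : ((2 * r + 1 : ℕ) : ℕ∞) < SC.girth k K 2)
    (u v : V)
    (w1 w2 : ℕ → V) (h1 : SC.IsNRWalk K (r + 1) w1) (h2 : SC.IsNRWalk K (r + 1) w2)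
    (h10 : w1 0 = u) (h11 : w1 1 = v) (h20 : w2 0 = v) (h21 : w2 1 = u) :
    w1 (r + 1) ≠ w2 (r + 1) := by
  intro hmeet
  set c : ℕ → V := fun i => if i ≤ r then w2 (r + 1 - i) else w1 (i - r)
  have hc₁ : SC.IsNRWalk K (r + 1) c := h2.reverse.congr fun i hi => by
    rcases hi.lt_or_eq with hi | rfl
    · simp [c, Nat.lt_succ_iff.1 hi]
    · simp [c, h20, h11]
  have hc₂ : SC.IsNRWalk K (r + 1) (fun j => c (r + j)) := h1.congr fun j _ => by
    rcases Nat.eq_zero_or_pos j with rfl | hj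
    · simp [c, h10, h21]
    · simp [c, show ¬ r + j ≤ r by omega]
  have hc : SC.IsNRWalk K (2 * r + 1) c := two_mul r ▸ hc₁.append hc₂
  have hclosed : c (2 * r + 1) = c 0 := by
    simp [c, show ¬ 2 * r + 1 ≤ r by omega, show 2 * r + 1 - r = r + 1 by omega, hmeet]
  exact (hc.girth_le_of_closed k hclosed).not_gt hg

/-- If `gr_1(K) > 2r+1` and `uv` is an edge of `K`, then a
non-returning walk of length `r+1` starting with the directed edge `uv` and one of
length `r+1` starting with `vu` have different endpoints. -/
theorem nrwalk_endpoints_ne {V : Type*} [LinearOrder V] (k : Type*) [Field k]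
    (K : SC V) (r : ℕ) (hg : ((2 * r + 1 : ℕ) : ℕ∞) < SC.girth k K 2)
    (u v : V) (hne : u ≠ v) (huv : ({u, v} : Finset V) ∈ K.faces)
    (w1 w2 : ℕ → V) (h1 : SC.IsNRWalk K (r + 1) w1) (h2 : SC.IsNRWalk K (r + 1) w2)
    (h10 : w1 0 = u) (h11 : w1 1 = v) (h20 : w2 0 = v) (h21 : w2 1 = u) :
    w1 (r + 1) ≠ w2 (r + 1) :=
  nrwalk_endpoints_ne_general k K r hg u v w1 w2 h1 h2 h10 h11 h20 h21
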